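/- arXiv:2405.00329 — 3 statements merged into one kernel-verified Lean document; each statement's English description precedes it below -/
import Mathlib

section
/- For any norm-convex metric space (Z,ρ) and any α > 0, the doubling scale and entropic scale satisfy (1/4)·s(Z,α) ≤ s̲(Z,α) ≤ s(Z,α). -/
open Metric MeasureTheory ENNReal Set

noncomputable def pack {Z : Type*} (ρ : Z → Z → ℝ) (B : Set Z) (ε : ℝ) : ℝ≥0∞ :=
  ⨆ (N : Finset Z) (_ : ↑N ⊆ B ∧ (↑N : Set Z).Pairwise fun a b => ε < ρ a b),
    (N.card : ℝ≥0∞)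

def mball {Z : Type*} (ρ : Z → Z → ℝ) (x : Z) (r : ℝ) : Set Z := {y | ρ x y ≤ r}

noncomputable def entScale {Z : Type*} (ρ₁ ρ₂ : Z → Z → ℝ) (α : ℝ) : ℝ :=
  sInf {s : ℝ | 0 < s ∧ ∀ x : Z, ∀ r : ℝ, 0 < r →
    pack ρ₂ (mball ρ₁ x r) s ≤ ENNReal.ofReal (Real.exp (α * r))}

noncomputable def diamScale {Z : Type*} (ρ₁ ρ₂ : Z → Z → ℝ) (α : ℝ) : ℝ :=
  sInf {s : ℝ | 0 < s ∧ ∀ x : Z, ∀ r : ℝ, 0 < r →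
    ∀ y ∈ mball ρ₁ x r, ∀ z ∈ mball ρ₁ x r, ρ₂ y z ≤ Real.exp (α * r) * s}

noncomputable def dblScale {Z : Type*} (ρ : Z → Z → ℝ) (α : ℝ) : ℝ :=
  sInf {s : ℝ | 0 < s ∧ ∀ x : Z,
    pack ρ (mball ρ x (2 * s)) s ≤ ENNReal.ofReal (Real.exp (2 * α * s))}

noncomputable def outScale {Z : Type*} (ρ : Z → Z → ℝ) (α : ℝ) : ℝ :=
  sInf {t : ℝ | ∃ γ : ℝ, 0 < γ ∧
    t = γ + (1 / α) * Real.log (pack ρ Set.univ γ).toReal}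

def IsMetric {Z : Type*} (ρ : Z → Z → ℝ) : Prop :=
  (∀ x y, ρ x y = 0 ↔ x = y) ∧ (∀ x y, ρ x y = ρ y x) ∧
    ∀ x y z, ρ x z ≤ ρ x y + ρ y z

def IsUltrametric' {Z : Type*} (ρ : Z → Z → ℝ) : Prop :=
  ∀ x y z, ρ x z ≤ max (ρ x y) (ρ y z)

def MetricPrivate {Z : Type*} [MeasurableSpace Z] (ρ₁ : Z → Z → ℝ) (α : ℝ)
    (M : Z → Measure Z) : Prop :=
  (∀ x, IsProbabilityMeasure (M x)) ∧
    ∀ x x' : Z, ∀ S : Set Z,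
      M x S ≤ ENNReal.ofReal (Real.exp (α * ρ₁ x x')) * M x' S

noncomputable def accuracy {Z : Type*} [MeasurableSpace Z] (ρ₁ ρ₂ : Z → Z → ℝ)
    (α : ℝ) : ℝ≥0∞ :=
  ⨅ (M : Z → Measure Z) (_ : MetricPrivate ρ₁ α M),
    ⨆ x : Z, ∫⁻ y, ENNReal.ofReal (ρ₂ y x) ∂(M x)

noncomputable def dEntScale (Z : Type*) [MetricSpace Z] (α : ℝ) : ℝ :=
  entScale (fun a b : Z => dist a b) (fun a b : Z => dist a b) α

lemma pack_le {Z : Type*} {ρ : Z → Z → ℝ} {B : Set Z} {ε : ℝ} {C : ℝ≥0∞}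
    (h : ∀ N : Finset Z, ↑N ⊆ B → ((↑N : Set Z).Pairwise fun a b => ε < ρ a b) →
      (N.card : ℝ≥0∞) ≤ C) : pack ρ B ε ≤ C :=
  iSup_le fun N => iSup_le fun hN => h N hN.1 hN.2

lemma le_pack {Z : Type*} {ρ : Z → Z → ℝ} {B : Set Z} {ε : ℝ} {N : Finset Z}
    (h1 : ↑N ⊆ B) (h2 : (↑N : Set Z).Pairwise fun a b => ε < ρ a b) :
    (N.card : ℝ≥0∞) ≤ pack ρ B ε :=
  le_iSup₂_of_le N ⟨h1, h2⟩ le_rfl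

section Geom

variable {E : Type*} [NormedAddCommGroup E] [NormedSpace ℝ E] {Z : Set E}

/-- contraction of `p` toward `c` with parameter `t ∈ [0,1]`. -/
def ctr (hZ : Convex ℝ Z) (c p : ↥Z) (t : ℝ) (h0 : 0 ≤ t) (h1 : t ≤ 1) : ↥Z :=
  ⟨(1 - t) • (c : E) + t • (p : E), hZ c.2 p.2 (by linarith) h0 (by ring)⟩

lemma dist_ctr_left (hZ : Convex ℝ Z) (c p : ↥Z) (t : ℝ) (h0 : 0 ≤ t) (h1 : t ≤ 1) :
    dist (c : E) (ctr hZ c p t h0 h1 : E) = t * dist (c : E) (p : E) := by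
  have key : (c : E) - ((1 - t) • (c : E) + t • (p : E)) = t • ((c : E) - (p : E)) := by
    module
  simp only [ctr, dist_eq_norm, key, norm_smul, Real.norm_of_nonneg h0]

lemma dist_ctr_right (hZ : Convex ℝ Z) (c p : ↥Z) (t : ℝ) (h0 : 0 ≤ t) (h1 : t ≤ 1) :
    dist (p : E) (ctr hZ c p t h0 h1 : E) = (1 - t) * dist (c : E) (p : E) := by
  have key : (p : E) - ((1 - t) • (c : E) + t • (p : E)) = (1 - t) • ((p : E) - (c : E)) := by
    module
  simp only [ctr, dist_eq_norm, key, norm_smul, Real.norm_of_nonneg (by linarith : (0:ℝ) ≤ 1 - t)]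
  rw [norm_sub_rev]

lemma dist_ctr_ctr (hZ : Convex ℝ Z) (c p q : ↥Z) (t : ℝ) (h0 : 0 ≤ t) (h1 : t ≤ 1) :
    dist (ctr hZ c p t h0 h1 : E) (ctr hZ c q t h0 h1 : E) = t * dist (p : E) (q : E) := by
  have key : ((1 - t) • (c : E) + t • (p : E)) - ((1 - t) • (c : E) + t • (q : E))
      = t • ((p : E) - (q : E)) := by module
  simp only [ctr, dist_eq_norm, key, norm_smul, Real.norm_of_nonneg h0]

/-- pull `p` toward `x` until it is within distance `m` of `x`. -/
noncomputable def pull (hZ : Convex ℝ Z) (x p : ↥Z) (m : ℝ) (hm : 0 ≤ m) : ↥Z :=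
  if h : dist (x : E) (p : E) ≤ m then p
  else ctr hZ x p (m / dist (x : E) (p : E))
    (div_nonneg hm dist_nonneg)
    ((div_le_one (lt_of_le_of_lt hm (not_le.1 h))).2 (le_of_not_ge h))

lemma pull_dist_left (hZ : Convex ℝ Z) (x p : ↥Z) (m : ℝ) (hm : 0 ≤ m) :
    dist (x : E) (pull hZ x p m hm : E) ≤ m := by
  unfold pull
  split_ifs with h
  · exact h
  · rw [dist_ctr_left]
    have hd : (0:ℝ) < dist (x : E) (p : E) := lt_of_le_of_lt hm (not_le.1 h)
    rw [div_mul_cancel₀ _ (ne_of_gt hd)]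

lemma pull_dist_right (hZ : Convex ℝ Z) (x p : ↥Z) (m : ℝ) (hm : 0 ≤ m)
    {c : ℝ} (hc : 0 ≤ c) (hp : dist (x : E) (p : E) ≤ m + c) :
    dist (p : E) (pull hZ x p m hm : E) ≤ c := by
  unfold pull
  split_ifs with h
  · simpa using hc
  · rw [dist_ctr_right]
    have hd : (0:ℝ) < dist (x : E) (p : E) := lt_of_le_of_lt hm (not_le.1 h)
    have : (1 - m / dist (x:E) (p:E)) * dist (x:E) (p:E) = dist (x:E) (p:E) - m := by
      field_simp
    rw [this]
    linarith

end Geom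

section Main

variable {E : Type*} [NormedAddCommGroup E] [NormedSpace ℝ E] {Z : Set E}

lemma cluster_card_le (hZ : Convex ℝ Z) {s : ℝ} (hs : 0 < s) (c : ↥Z) (T : Finset ↥Z)
    (hT : ∀ p ∈ T, dist (c : E) (p : E) ≤ 6 * s)
    (hsep : (↑T : Set ↥Z).Pairwise fun a b => 4 * s < dist (a : E) (b : E)) :
    (T.card : ℝ≥0∞) ≤ pack (fun a b : ↥Z => dist (a:E) (b:E))
      (mball (fun a b : ↥Z => dist (a:E) (b:E)) c (2*s)) s := by
  classical
  set g : ↥Z → ↥Z := fun p => ctr hZ c p (1/3) (by norm_num) (by norm_num) with hg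
  have key : ∀ a b : ↥Z, dist (g a : E) (g b : E) = (1/3) * dist (a:E) (b:E) :=
    fun a b => dist_ctr_ctr hZ c a b (1/3) (by norm_num) (by norm_num)
  have keyc : ∀ a : ↥Z, dist (c : E) (g a : E) = (1/3) * dist (c:E) (a:E) :=
    fun a => dist_ctr_left hZ c a (1/3) (by norm_num) (by norm_num)
  have hginj : Function.Injective g := by
    intro a b hab
    have h0 : (0:ℝ) = (1/3) * dist (a:E) (b:E) := by
      have := key a b; rwa [hab, dist_self] at this
    have : dist (a:E) (b:E) = 0 := by linarith
    exact Subtype.coe_injective (by rwa [dist_eq_zero] at this)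
  have hcard : T.card = (T.image g).card := (Finset.card_image_of_injective T hginj).symm
  rw [hcard]
  apply le_pack
  · intro q hq
    simp only [Finset.coe_image, Set.mem_image, Finset.mem_coe] at hq
    obtain ⟨p, hp, rfl⟩ := hq
    show dist (c:E) (g p : E) ≤ 2*s
    rw [keyc]
    have := hT p hp
    linarith
  · intro a ha b hb hab
    simp only [Finset.coe_image, Set.mem_image, Finset.mem_coe] at ha hb
    obtain ⟨p, hp, rfl⟩ := ha
    obtain ⟨p', hp', rfl⟩ := hb
    have hne : p ≠ p' := fun h => hab (by rw [h])
    have := hsep hp hp' hne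
    show s < dist (g p : E) (g p' : E)
    rw [key]
    linarith

lemma key_step (hZ : Convex ℝ Z) {α s r : ℝ} (hs : 0 < s) (hr : 2*s < r) (x : ↥Z)
    (hD : ∀ y : ↥Z, pack (fun a b : ↥Z => dist (a:E) (b:E))
      (mball (fun a b : ↥Z => dist (a:E) (b:E)) y (2*s)) s
      ≤ ENNReal.ofReal (Real.exp (2*α*s)))
    (P : Finset ↥Z)
    (hPsub : ↑P ⊆ mball (fun a b : ↥Z => dist (a:E) (b:E)) x r)
    (hPsep : (↑P : Set ↥Z).Pairwise fun a b => 4*s < dist (a:E) (b:E)) :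
    (P.card : ℝ≥0∞) ≤ pack (fun a b : ↥Z => dist (a:E) (b:E))
      (mball (fun a b : ↥Z => dist (a:E) (b:E)) x (r - 2*s)) (4*s)
      * ENNReal.ofReal (Real.exp (2*α*s)) := by
  classical
  set m : ℝ := r - 2*s with hmdef
  have hm : 0 < m := by simp [hmdef]; linarith
  set f : ↥Z → ↥Z := fun p => pull hZ x p m hm.le with hf
  have hf1 : ∀ p : ↥Z, dist (x:E) (f p : E) ≤ m := fun p => pull_dist_left hZ x p m hm.le
  have hf2 : ∀ p ∈ P, dist (p:E) (f p : E) ≤ 2*s := by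
    intro p hp
    refine pull_dist_right hZ x p m hm.le (by linarith) ?_
    have : dist (x:E) (p:E) ≤ r := hPsub hp
    linarith
  -- maximal subset with separated images
  set 𝒬 : Finset (Finset ↥Z) := P.powerset.filter
    (fun Q => ∀ a ∈ Q, ∀ b ∈ Q, a ≠ b → 4*s < dist (f a : E) (f b : E)) with h𝒬
  obtain ⟨Q, hQ𝒬, hQmax⟩ := Finset.exists_max_image 𝒬 Finset.card ⟨∅, by simp [h𝒬]⟩
  rw [h𝒬, Finset.mem_filter, Finset.mem_powerset] at hQ𝒬
  obtain ⟨hQP, hQsep⟩ := hQ𝒬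
  have hcover : ∀ p ∈ P, ∃ q ∈ Q, dist (f p : E) (f q : E) ≤ 4*s := by
    intro p hp
    by_cases hpQ : p ∈ Q
    · exact ⟨p, hpQ, by rw [dist_self]; linarith⟩
    by_contra hcon
    push_neg at hcon
    have hins : insert p Q ∈ 𝒬 := by
      rw [h𝒬, Finset.mem_filter, Finset.mem_powerset]
      refine ⟨Finset.insert_subset hp hQP, ?_⟩
      intro a ha b hb hab
      rcases Finset.mem_insert.1 ha with rfl | ha'
      · rcases Finset.mem_insert.1 hb with rfl | hb'
        · exact absurd rfl hab
        · exact lt_of_not_ge (fun h => absurd h (not_le.2 (hcon b hb')))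
      · rcases Finset.mem_insert.1 hb with rfl | hb'
        · rw [dist_comm]
          exact hcon a ha'
        · exact hQsep a ha' b hb' hab
    have h1 := hQmax _ hins
    have h2 : (insert p Q).card = Q.card + 1 := Finset.card_insert_of_notMem hpQ
    omega
  -- cover by clusters
  set T : ↥Z → Finset ↥Z := fun q => P.filter (fun p => dist (f p : E) (f q : E) ≤ 4*s) with hT
  have hPsubT : P ⊆ Q.biUnion T := by
    intro p hp
    obtain ⟨q, hq, hd⟩ := hcover p hp
    exact Finset.mem_biUnion.2 ⟨q, hq, Finset.mem_filter.2 ⟨hp, hd⟩⟩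
  have hcard : P.card ≤ ∑ q ∈ Q, (T q).card :=
    (Finset.card_le_card hPsubT).trans Finset.card_biUnion_le
  have hcluster : ∀ q ∈ Q, ((T q).card : ℝ≥0∞) ≤ ENNReal.ofReal (Real.exp (2*α*s)) := by
    intro q hq
    refine (cluster_card_le hZ hs (f q) (T q) ?_ ?_).trans (hD (f q))
    · intro p hp
      rw [hT, Finset.mem_filter] at hp
      calc dist ((f q : ↥Z) : E) (p:E) ≤ dist (f q : E) (f p : E) + dist (f p : E) (p : E) :=
            dist_triangle _ _ _
        _ ≤ 4*s + 2*s := by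
            refine add_le_add ?_ ?_
            · rw [dist_comm]; exact hp.2
            · rw [dist_comm]; exact hf2 p hp.1
        _ = 6*s := by ring
    · exact hPsep.mono (by exact_mod_cast Finset.filter_subset _ _)
  have hQcard : (Q.card : ℝ≥0∞) ≤ pack (fun a b : ↥Z => dist (a:E) (b:E))
      (mball (fun a b : ↥Z => dist (a:E) (b:E)) x m) (4*s) := by
    have hinjOn : ∀ a ∈ Q, ∀ b ∈ Q, f a = f b → a = b := by
      intro a ha b hb hab
      by_contra hne
      have := hQsep a ha b hb hne
      rw [hab, dist_self] at this
      linarith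
    have hc : Q.card = (Q.image f).card := (Finset.card_image_of_injOn hinjOn).symm
    rw [hc]
    apply le_pack
    · intro q hq
      simp only [Finset.coe_image, Set.mem_image, Finset.mem_coe] at hq
      obtain ⟨p, hp, rfl⟩ := hq
      exact hf1 p
    · intro a ha b hb hab
      simp only [Finset.coe_image, Set.mem_image, Finset.mem_coe] at ha hb
      obtain ⟨p, hp, rfl⟩ := ha
      obtain ⟨p', hp', rfl⟩ := hb
      exact hQsep p hp p' hp' (fun h => hab (by rw [h]))
  calc (P.card : ℝ≥0∞) ≤ ∑ q ∈ Q, ((T q).card : ℝ≥0∞) := by exact_mod_cast hcard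
    _ ≤ ∑ _q ∈ Q, ENNReal.ofReal (Real.exp (2*α*s)) := Finset.sum_le_sum hcluster
    _ = (Q.card : ℝ≥0∞) * ENNReal.ofReal (Real.exp (2*α*s)) := by
        rw [Finset.sum_const, nsmul_eq_mul]
    _ ≤ _ := mul_le_mul_left hQcard _

end Main

section Main2

variable {E : Type*} [NormedAddCommGroup E] [NormedSpace ℝ E] {Z : Set E}

lemma base_case (hZ : Convex ℝ Z) {α s r : ℝ} (hα : 0 < α) (hs : 0 < s) (hr : 0 < r)
    (hr2 : r ≤ 2*s) (x : ↥Z) :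
    pack (fun a b : ↥Z => dist (a:E) (b:E))
      (mball (fun a b : ↥Z => dist (a:E) (b:E)) x r) (4*s)
      ≤ ENNReal.ofReal (Real.exp (α*r)) := by
  apply pack_le
  intro N h1 h2
  have hone : N.card ≤ 1 := by
    refine Finset.card_le_one.2 ?_
    intro a ha b hb
    by_contra hne
    have hd := h2 ha hb hne
    have hxa : dist (x:E) (a:E) ≤ r := h1 ha
    have hxb : dist (x:E) (b:E) ≤ r := h1 hb
    have : dist (a:E) (b:E) ≤ dist (a:E) (x:E) + dist (x:E) (b:E) := dist_triangle _ _ _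
    rw [dist_comm (a:E) (x:E)] at this
    linarith
  calc (N.card : ℝ≥0∞) ≤ 1 := by exact_mod_cast hone
    _ ≤ ENNReal.ofReal (Real.exp (α*r)) := by
        rw [← ENNReal.ofReal_one]
        exact ENNReal.ofReal_le_ofReal (Real.one_le_exp (by positivity))

lemma induction_lemma (hZ : Convex ℝ Z) {α s : ℝ} (hα : 0 < α) (hs : 0 < s)
    (hD : ∀ y : ↥Z, pack (fun a b : ↥Z => dist (a:E) (b:E))
      (mball (fun a b : ↥Z => dist (a:E) (b:E)) y (2*s)) s
      ≤ ENNReal.ofReal (Real.exp (2*α*s))) :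
    ∀ n : ℕ, ∀ x : ↥Z, ∀ r : ℝ, 0 < r → r ≤ 2*s*(n+1) →
      pack (fun a b : ↥Z => dist (a:E) (b:E))
        (mball (fun a b : ↥Z => dist (a:E) (b:E)) x r) (4*s)
        ≤ ENNReal.ofReal (Real.exp (α*r)) := by
  intro n
  induction n with
  | zero =>
    intro x r hr hrle
    refine base_case hZ hα hs hr ?_ x
    push_cast at hrle
    linarith
  | succ n ih =>
    intro x r hr hrle
    by_cases hc : r ≤ 2*s
    · exact base_case hZ hα hs hr hc x
    push_neg at hc
    apply pack_le
    intro N h1 h2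
    have hkey := key_step hZ hs hc x hD N h1 h2
    have hih : pack (fun a b : ↥Z => dist (a:E) (b:E))
        (mball (fun a b : ↥Z => dist (a:E) (b:E)) x (r - 2*s)) (4*s)
        ≤ ENNReal.ofReal (Real.exp (α*(r - 2*s))) := by
      refine ih x (r - 2*s) (by linarith) ?_
      push_cast at hrle ⊢
      linarith
    calc (N.card : ℝ≥0∞) ≤ _ := hkey
      _ ≤ ENNReal.ofReal (Real.exp (α*(r - 2*s))) * ENNReal.ofReal (Real.exp (2*α*s)) :=
          mul_le_mul_left hih _
      _ = ENNReal.ofReal (Real.exp (α*r)) := by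
          rw [← ENNReal.ofReal_mul (Real.exp_nonneg _), ← Real.exp_add]
          ring_nf

lemma dbl_to_ent (hZ : Convex ℝ Z) {α s : ℝ} (hα : 0 < α) (hs : 0 < s)
    (hD : ∀ y : ↥Z, pack (fun a b : ↥Z => dist (a:E) (b:E))
      (mball (fun a b : ↥Z => dist (a:E) (b:E)) y (2*s)) s
      ≤ ENNReal.ofReal (Real.exp (2*α*s))) :
    ∀ x : ↥Z, ∀ r : ℝ, 0 < r →
      pack (fun a b : ↥Z => dist (a:E) (b:E))
        (mball (fun a b : ↥Z => dist (a:E) (b:E)) x r) (4*s)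
        ≤ ENNReal.ofReal (Real.exp (α*r)) := by
  intro x r hr
  refine induction_lemma hZ hα hs hD ⌈r / (2*s)⌉₊ x r hr ?_
  have h1 : r / (2*s) ≤ (⌈r / (2*s)⌉₊ : ℝ) := Nat.le_ceil _
  have h2s : (0:ℝ) < 2*s := by linarith
  have : r ≤ 2*s * ⌈r / (2*s)⌉₊ := by
    rw [← div_le_iff₀' h2s]
    exact h1
  nlinarith [Nat.cast_nonneg (α := ℝ) ⌈r / (2*s)⌉₊]

end Main2


theorem stmt7 {E : Type*} [NormedAddCommGroup E] [NormedSpace ℝ E] (Z : Set E)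
    (hZ : Convex ℝ Z) (α : ℝ) (hα : 0 < α) :
    (1 / 4) * entScale (fun a b : Z => dist (a : E) b) (fun a b : Z => dist (a : E) b) α ≤
        dblScale (fun a b : Z => dist (a : E) b) α ∧
      dblScale (fun a b : Z => dist (a : E) b) α ≤
        entScale (fun a b : Z => dist (a : E) b) (fun a b : Z => dist (a : E) b) α := by
  rw [entScale, dblScale]
  set ρ : ↥Z → ↥Z → ℝ := fun a b => dist (a:E) (b:E) with hρ
  set A := {s : ℝ | 0 < s ∧ ∀ x : ↥Z, ∀ r : ℝ, 0 < r →
    pack ρ (mball ρ x r) s ≤ ENNReal.ofReal (Real.exp (α * r))} with hA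
  set B := {s : ℝ | 0 < s ∧ ∀ x : ↥Z,
    pack ρ (mball ρ x (2 * s)) s ≤ ENNReal.ofReal (Real.exp (2 * α * s))} with hB
  have hAB : A ⊆ B := by
    intro s hs
    refine ⟨hs.1, fun x => ?_⟩
    rw [show 2 * α * s = α * (2 * s) by ring]
    exact hs.2 x (2*s) (by linarith [hs.1])
  have h4 : ∀ s ∈ B, 4*s ∈ A := by
    intro s hs
    refine ⟨by linarith [hs.1], ?_⟩
    intro x r hr
    exact dbl_to_ent hZ hα hs.1 (fun y => by
      have := hs.2 y
      rwa [show 2 * α * s = 2*α*s by ring] at this) x r hr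
  have hAbdd : BddBelow A := ⟨0, fun s hs => hs.1.le⟩
  have hBbdd : BddBelow B := ⟨0, fun s hs => hs.1.le⟩
  by_cases hBne : B.Nonempty
  · obtain ⟨b0, hb0⟩ := hBne
    have hAne : A.Nonempty := ⟨4*b0, h4 b0 hb0⟩
    constructor
    · refine le_csInf ⟨b0, hb0⟩ ?_
      intro b hb
      have h1 : sInf A ≤ 4*b := csInf_le hAbdd (h4 b hb)
      linarith
    · exact csInf_le_csInf hBbdd hAne hAB
  · have hBempty : B = ∅ := Set.not_nonempty_iff_eq_empty.1 hBne
    have hAempty : A = ∅ := Set.eq_empty_of_subset_empty (hBempty ▸ hAB)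
    rw [hAempty, hBempty, Real.sInf_empty]
    norm_num
end

section
/- For any norm-convex metric space (Z,ρ) and any α > 0, the outer scale satisfies s̄(Z,α) ≤ 3·s(Z,α)·(1 + ln(diam(Z)/s(Z,α))). -/
open Metric MeasureTheory ENNReal Set

/-!
Let `s` be admissible for the entropic scale and `γ ≥ s`. By convexity the homothety of ratio
`s / γ` centred at `x` maps `Z` into itself, so a `γ`-packing of the ball `B(x, 2γ)` becomes an
`s`-packing of `B(x, 2s)`, which has at most `e^{2αs}` points. A maximal `2γ`-separated subset of a
`γ`-packing covers it by `2γ`-balls; chaining through the scales `s, 2s, …, 2^k s ≥ diam Z` gives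
`N(Z, s) ≤ e^{2αsk}`, hence `s̄ ≤ s (1 + 2k)`. With `k = ⌈log₂ (diam Z / s)⌉` and `2 / ln 2 ≤ 3`
this is the claimed bound.
-/

section Pack

variable {X : Type*} {ρ : X → X → ℝ} {B : Set X} {ε : ℝ}

lemma pack_le_iff {c : ℝ≥0∞} :
    pack ρ B ε ≤ c ↔ ∀ N : Finset X, ↑N ⊆ B →
      (↑N : Set X).Pairwise (fun a b => ε < ρ a b) → (N.card : ℝ≥0∞) ≤ c := by
  simp [pack, iSup_le_iff, and_imp]

lemma card_le_pack {N : Finset X} (hNB : ↑N ⊆ B)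
    (hN : (↑N : Set X).Pairwise fun a b => ε < ρ a b) : (N.card : ℝ≥0∞) ≤ pack ρ B ε :=
  pack_le_iff.1 le_rfl N hNB hN

lemma pack_le_one (h : ∀ a b, ρ a b ≤ ε) : pack ρ B ε ≤ 1 :=
  pack_le_iff.2 fun N _ hN => by
    exact_mod_cast Finset.card_le_one.2 fun a ha b hb =>
      by_contra fun hab => (h a b).not_gt (hN ha hb hab)

lemma pack_eq_zero_of_lt_one (h : pack ρ B ε < 1) : pack ρ B ε = 0 :=
  nonpos_iff_eq_zero.1 <| pack_le_iff.2 fun N hNB hN => by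
    have : N.card < 1 := by exact_mod_cast (card_le_pack hNB hN).trans_lt h
    simp [Nat.lt_one_iff.1 this]

lemma log_toReal_pack_nonneg : 0 ≤ Real.log (pack ρ B ε).toReal := by
  rcases lt_or_ge (pack ρ B ε) 1 with h | h
  · simp [pack_eq_zero_of_lt_one h]
  rcases eq_or_ne (pack ρ B ε) ∞ with htop | htop
  · simp [htop]
  exact Real.log_nonneg (ENNReal.toReal_one ▸ ENNReal.toReal_mono htop h)

end Pack

section Scales

variable {X : Type*} {ρ ρ₁ ρ₂ : X → X → ℝ} {α : ℝ}

def IsEntropicScale (ρ₁ ρ₂ : X → X → ℝ) (α s : ℝ) : Prop :=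
  0 < s ∧ ∀ x : X, ∀ r : ℝ, 0 < r → pack ρ₂ (mball ρ₁ x r) s ≤ ENNReal.ofReal (Real.exp (α * r))

lemma entScale_le_of_forall_le {D : ℝ} (hα : 0 ≤ α) (hD : 0 ≤ D) (h : ∀ a b, ρ₂ a b ≤ D) :
    entScale ρ₁ ρ₂ α ≤ D := by
  refine le_of_forall_pos_le_add fun δ hδ => csInf_le ⟨0, fun _ hs => hs.1.le⟩ ⟨by positivity,
    fun x r hr => ?_⟩
  calc pack ρ₂ (mball ρ₁ x r) (D + δ) ≤ 1 := pack_le_one fun a b => (h a b).trans (by linarith)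
    _ ≤ ENNReal.ofReal (Real.exp (α * r)) :=
      ENNReal.one_le_ofReal.2 (Real.one_le_exp (by positivity))

lemma outScale_le (hα : 0 ≤ α) {γ : ℝ} (hγ : 0 < γ) :
    outScale ρ α ≤ γ + 1 / α * Real.log (pack ρ univ γ).toReal := by
  refine csInf_le ⟨0, ?_⟩ ⟨γ, hγ, rfl⟩
  rintro _ ⟨γ', hγ', rfl⟩
  exact add_nonneg hγ'.le (mul_nonneg (by positivity) log_toReal_pack_nonneg)

lemma outScale_le_of_pack_le (hα : 0 < α) {γ c : ℝ} (hγ : 0 < γ) (hc : 0 ≤ c)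
    (h : pack ρ univ γ ≤ ENNReal.ofReal (Real.exp (α * c))) : outScale ρ α ≤ γ + c := by
  have hlog : Real.log (pack ρ univ γ).toReal ≤ α * c := by
    rcases (ENNReal.toReal_nonneg (a := pack ρ univ γ)).eq_or_lt with h0 | h0
    · rw [← h0, Real.log_zero]; positivity
    · exact (Real.log_le_iff_le_exp h0).2 (ENNReal.toReal_le_of_le_ofReal (by positivity) h)
  calc outScale ρ α ≤ γ + 1 / α * Real.log (pack ρ univ γ).toReal := outScale_le hα.le hγ
    _ ≤ γ + 1 / α * (α * c) := by gcongr
    _ = γ + c := by field_simp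

end Scales

section Chaining

variable {X : Type*} [PseudoMetricSpace X]

lemma Finset.exists_subset_separated_net (P : Finset X) {r : ℝ} (hr : 0 ≤ r) :
    ∃ Q ⊆ P, (↑Q : Set X).Pairwise (fun a b => r < dist a b) ∧
      ∀ p ∈ P, ∃ q ∈ Q, dist q p ≤ r := by
  classical
  obtain ⟨Q, hQ, hmax⟩ := Finset.exists_max_image
    (P.powerset.filter fun Q : Finset X => (↑Q : Set X).Pairwise fun a b => r < dist a b)
    Finset.card ⟨∅, by simp⟩
  rw [Finset.mem_filter, Finset.mem_powerset] at hQ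
  refine ⟨Q, hQ.1, hQ.2, fun p hp => ?_⟩
  by_contra! hfar
  have hpQ : p ∉ Q := fun h => (hfar p h).not_ge (by simpa using hr)
  have hsep : (↑(insert p Q) : Set X).Pairwise fun a b => r < dist a b := by
    rw [Finset.coe_insert, Set.pairwise_insert]
    exact ⟨hQ.2, fun q hq _ => ⟨dist_comm p q ▸ hfar q hq, hfar q hq⟩⟩
  have := hmax _ (Finset.mem_filter.2 ⟨Finset.mem_powerset.2 (Finset.insert_subset hp hQ.1), hsep⟩)
  rw [Finset.card_insert_of_notMem hpQ] at this
  omega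

lemma pack_univ_le_pow {E : ℝ≥0∞} {s₀ D : ℝ} (hs₀ : 0 ≤ s₀) (hD : ∀ a b : X, dist a b ≤ D)
    (hloc : ∀ (x : X) γ, s₀ ≤ γ → pack dist (mball dist x (2 * γ)) γ ≤ E) (k : ℕ) {γ : ℝ}
    (hγ : s₀ ≤ γ) (hk : D ≤ 2 ^ k * γ) : pack dist (univ : Set X) γ ≤ E ^ k := by
  classical
  induction k generalizing γ with
  | zero =>
    exact (pack_le_one fun a b => (hD a b).trans (by simpa using hk)).trans_eq (pow_zero E).symm
  | succ k ih =>
    refine pack_le_iff.2 fun P _ hP => ?_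
    obtain ⟨Q, hQP, hQ, hcover⟩ := P.exists_subset_separated_net (r := 2 * γ) (by linarith)
    have hPQ : P ⊆ Q.biUnion fun q => P.filter fun p => dist q p ≤ 2 * γ := fun p hp => by
      obtain ⟨q, hq, hqp⟩ := hcover p hp
      exact Finset.mem_biUnion.2 ⟨q, hq, Finset.mem_filter.2 ⟨hp, hqp⟩⟩
    have hball : ∀ q ∈ Q, (((P.filter fun p => dist q p ≤ 2 * γ).card : ℕ) : ℝ≥0∞) ≤ E :=
      fun q _ => (card_le_pack (fun p hp => (Finset.mem_filter.1 hp).2)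
        (hP.mono (Finset.coe_subset.2 (Finset.filter_subset _ _)))).trans (hloc q γ hγ)
    have hQk : (Q.card : ℝ≥0∞) ≤ E ^ k :=
      (card_le_pack (subset_univ _) hQ).trans
        (ih (by linarith) (by rw [pow_succ] at hk; linarith))
    calc (P.card : ℝ≥0∞) ≤ ∑ q ∈ Q, ((P.filter fun p => dist q p ≤ 2 * γ).card : ℝ≥0∞) := by
          exact_mod_cast (Finset.card_le_card hPQ).trans Finset.card_biUnion_le
      _ ≤ ∑ _q ∈ Q, E := Finset.sum_le_sum hball
      _ = Q.card * E := by rw [Finset.sum_const, nsmul_eq_mul]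
      _ ≤ E ^ k * E := by gcongr
      _ = E ^ (k + 1) := (pow_succ E k).symm

end Chaining

lemma pack_le_pack_of_dist_eq_mul {X Y : Type*} [PseudoMetricSpace X] [PseudoMetricSpace Y]
    {f : X → Y} {l ε : ℝ} (hl : 0 < l) (hε : 0 ≤ ε) (hf : ∀ a b, dist (f a) (f b) = l * dist a b)
    {B : Set X} {B' : Set Y} (hB : MapsTo f B B') : pack dist B ε ≤ pack dist B' (l * ε) := by
  classical
  refine pack_le_iff.2 fun N hNB hN => ?_
  have hinj : InjOn f N := fun a ha b hb hab => by
    by_contra hne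
    have hsep := hN ha hb hne
    have hzero : dist (f a) (f b) = 0 := by rw [hab, dist_self]
    nlinarith [hf a b]
  calc (N.card : ℝ≥0∞) = (N.image f).card := by rw [Finset.card_image_of_injOn hinj]
    _ ≤ pack dist B' (l * ε) := by
      refine card_le_pack (by simpa using hB.mono_left hNB |>.image_subset) ?_
      rw [Finset.coe_image, hinj.pairwise_image]
      exact hN.imp fun a b h => show _ < dist (f a) (f b) by
        rw [hf]; exact mul_lt_mul_of_pos_left h hl

section Convex

variable {E : Type*} [NormedAddCommGroup E] [NormedSpace ℝ E] {Z : Set E}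

lemma Convex.pack_mball_le (hZ : Convex ℝ Z) (x : Z) {l r ε : ℝ} (hl : 0 < l) (hl1 : l ≤ 1)
    (hε : 0 ≤ ε) : pack dist (mball dist x r) ε ≤ pack dist (mball dist x (l * r)) (l * ε) := by
  let h : Z → Z := fun p => ⟨x + l • ((p : E) - x), hZ.add_smul_sub_mem x.2 p.2 ⟨hl.le, hl1⟩⟩
  have hh : ∀ p q, dist (h p) (h q) = l * dist p q := fun p q => by
    simp [h, Subtype.dist_eq, dist_add_left, dist_smul₀, abs_of_pos hl]
  refine pack_le_pack_of_dist_eq_mul hl hε hh fun p (hp : dist x p ≤ r) => ?_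
  show dist (x : E) (x + l • ((p : E) - x)) ≤ l * r
  rw [dist_self_add_right, norm_smul, Real.norm_of_nonneg hl.le, ← dist_eq_norm, dist_comm]
  exact mul_le_mul_of_nonneg_left hp hl.le

lemma IsEntropicScale.pack_mball_two_mul_le (hZ : Convex ℝ Z) {α s γ : ℝ}
    (hs : IsEntropicScale (X := Z) dist dist α s) (x : Z) (hγ : s ≤ γ) :
    pack dist (mball dist x (2 * γ)) γ ≤ ENNReal.ofReal (Real.exp (α * (2 * s))) := by
  have hγ0 : 0 < γ := hs.1.trans_le hγ
  have hl : s / γ * γ = s := div_mul_cancel₀ s hγ0.ne'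
  calc pack dist (mball dist x (2 * γ)) γ
      ≤ pack dist (mball dist x (s / γ * (2 * γ))) (s / γ * γ) :=
        hZ.pack_mball_le x (div_pos hs.1 hγ0) ((div_le_one hγ0).2 hγ) hγ0.le
    _ = pack dist (mball dist x (2 * s)) s := by rw [hl, mul_left_comm, hl]
    _ ≤ _ := hs.2 x _ (by linarith [hs.1])

lemma outScale_le_of_isEntropicScale (hZ : Convex ℝ Z) {α s D : ℝ} (hα : 0 < α)
    (hD : ∀ a b : Z, dist a b ≤ D) (hs : IsEntropicScale (X := Z) dist dist α s) {k : ℕ}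
    (hk : D ≤ 2 ^ k * s) : outScale (Z := Z) dist α ≤ s * (1 + 2 * k) := by
  have hpack := pack_univ_le_pow hs.1.le hD (fun x γ hγ => hs.pack_mball_two_mul_le hZ x hγ) k
    le_rfl hk
  rw [← ENNReal.ofReal_pow (Real.exp_pos _).le, ← Real.exp_nat_mul,
    show (k : ℝ) * (α * (2 * s)) = α * (2 * s * k) by ring] at hpack
  have hs₀ := hs.1
  calc outScale dist α ≤ s + 2 * s * k := outScale_le_of_pack_le hα hs₀ (by positivity) hpack
    _ = s * (1 + 2 * k) := by ring

end Convex

lemma exists_le_two_pow_and_le_log {q : ℝ} (hq : 1 ≤ q) :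
    ∃ k : ℕ, q ≤ 2 ^ k ∧ 1 + 2 * (k : ℝ) ≤ 3 * (1 + Real.log q) := by
  have hlogb : 0 ≤ Real.logb 2 q := Real.logb_nonneg one_lt_two hq
  refine ⟨⌈Real.logb 2 q⌉₊, ?_, ?_⟩
  · calc q = 2 ^ Real.logb 2 q := (Real.rpow_logb two_pos one_lt_two.ne' (by linarith)).symm
      _ ≤ 2 ^ (⌈Real.logb 2 q⌉₊ : ℝ) := Real.rpow_le_rpow_of_exponent_le one_le_two (Nat.le_ceil _)
      _ = 2 ^ ⌈Real.logb 2 q⌉₊ := Real.rpow_natCast 2 _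
  · have hceil := Nat.ceil_lt_add_one hlogb
    have hlog2 : 2 / 3 < Real.log 2 := by linarith [Real.log_two_gt_d9]
    have : Real.logb 2 q * Real.log 2 = Real.log q := by
      rw [Real.logb, div_mul_cancel₀ _ (Real.log_pos one_lt_two).ne']
    nlinarith [Real.log_nonneg hq]

theorem stmt9 {E : Type*} [NormedAddCommGroup E] [NormedSpace ℝ E] (Z : Set E)
    (hZ : Convex ℝ Z) (α : ℝ) (hα : 0 < α) (hbdd : Bornology.IsBounded Z)
    (hs : 0 < entScale (fun a b : Z => dist (a : E) b) (fun a b : Z => dist (a : E) b) α) :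
    outScale (fun a b : Z => dist (a : E) b) α ≤
      3 * entScale (fun a b : Z => dist (a : E) b) (fun a b : Z => dist (a : E) b) α *
        (1 + Real.log (Metric.diam Z /
          entScale (fun a b : Z => dist (a : E) b) (fun a b : Z => dist (a : E) b) α)) := by
  set s := entScale (fun a b : Z => dist (a : E) b) (fun a b : Z => dist (a : E) b) α
  have hdiam : ∀ a b : Z, dist a b ≤ diam Z := fun a b => dist_le_diam_of_mem hbdd a.2 b.2
  have hsD : s ≤ diam Z := entScale_le_of_forall_le hα.le diam_nonneg hdiam
  obtain ⟨k, hk, hk3⟩ := exists_le_two_pow_and_le_log ((one_le_div hs).2 hsD)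
  have hne : {s | IsEntropicScale (X := Z) dist dist α s}.Nonempty :=
    Set.nonempty_iff_ne_empty.2 fun h => hs.ne' <| by
      show sInf {s | IsEntropicScale (X := Z) dist dist α s} = 0
      rw [h, Real.sInf_empty]
  have hout : outScale (fun a b : Z => dist (a : E) b) α ≤ s * (1 + 2 * k) := by
    rw [← div_le_iff₀ (by positivity)]
    refine le_csInf hne fun s₀ hs₀ => (div_le_iff₀ (by positivity)).2 ?_
    refine outScale_le_of_isEntropicScale hZ hα hdiam hs₀ ?_
    calc diam Z ≤ 2 ^ k * s := (div_le_iff₀ hs).1 hk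
      _ ≤ 2 ^ k * s₀ := by gcongr; exact csInf_le ⟨0, fun _ h => h.1.le⟩ hs₀
  calc _ ≤ s * (1 + 2 * k) := hout
    _ ≤ s * (3 * (1 + Real.log (diam Z / s))) := mul_le_mul_of_nonneg_left hk3 hs.le
    _ = _ := by ring
end

section
/- For any 0 < γ < 1, the set of all probability measures on [0,1]^d, equipped with the 1-Wasserstein distance induced by the ℓ∞-norm on [0,1]^d, admits a γ-cover of cardinality at most exp((5/γ)^d). -/
open Metric MeasureTheory ENNReal Set

/-! Send each point of the cube to the corner `(k + 1) / n` of its grid cell; this moves `μ` by at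
most `1 / n`. Enumerate the `N = n ^ d` grid points along a snake path, so that consecutive points
are at `ℓ∞`-distance `1 / n`, and round the masses of the cells to multiples of `1 / N` by taking
floors of the scaled prefix sums. Every prefix sum then moves by at most `1 / N`, and Abel summation
along the path bounds the cost of the rounding by `N · (1 / N) · (1 / n)`. The rounded measures are
indexed by the `(2N - 1).choose N ≤ 4 ^ N ≤ exp ((5 / γ) ^ d)` compositions of `N` into `N` parts. -/

section Snake

variable (n : ℕ)

def reflectDigit (a r : ℕ) : ℕ := if a % 2 = 0 then r else n - 1 - r

def snakeDigit (q : ℕ) : ℕ := reflectDigit n (q / n) (q % n)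

/-- `snake n i j` is digit `j` of `i` in base `n`, reflected when the number formed by the higher
digits is odd: the boustrophedon enumeration of `{0, …, n - 1} ^ d`. -/
def snake (i j : ℕ) : ℕ := snakeDigit n (i / n ^ j)

def snakeIndex : (d : ℕ) → (Fin d → ℕ) → ℕ
  | 0, _ => 0
  | d + 1, y =>
    n * snakeIndex d (Fin.tail y) + reflectDigit n (snakeIndex d (Fin.tail y)) (y 0)

variable {n}

lemma reflectDigit_lt {a r : ℕ} (hr : r < n) : reflectDigit n a r < n := by
  unfold reflectDigit; split <;> omega

lemma reflectDigit_reflectDigit {a r : ℕ} (hr : r < n) :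
    reflectDigit n a (reflectDigit n a r) = r := by
  unfold reflectDigit; split <;> omega

lemma snakeDigit_mul_add {a r : ℕ} (hr : r < n) :
    snakeDigit n (n * a + r) = reflectDigit n a r := by
  rw [snakeDigit, Nat.mul_add_div (by omega), Nat.div_eq_of_lt hr, add_zero, Nat.mul_add_mod,
    Nat.mod_eq_of_lt hr]

lemma snakeDigit_lt (hn : 0 < n) (q : ℕ) : snakeDigit n q < n :=
  reflectDigit_lt (Nat.mod_lt q hn)

/-- At a carry the reflection flips, so the digit stays put. -/
lemma snakeDigit_succ (q : ℕ) :
    snakeDigit n (q + 1) ≤ snakeDigit n q + 1 ∧ snakeDigit n q ≤ snakeDigit n (q + 1) + 1 := by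
  rcases Nat.eq_zero_or_pos n with rfl | hn
  · simp only [snakeDigit, reflectDigit, Nat.div_zero, Nat.zero_mod, Nat.mod_zero, ↓reduceIte]
    omega
  obtain ⟨a, r, hr, rfl⟩ : ∃ a r, r < n ∧ q = n * a + r :=
    ⟨q / n, q % n, Nat.mod_lt q hn, (Nat.div_add_mod q n).symm⟩
  rcases (by omega : r + 1 < n ∨ r + 1 = n) with hr' | hr'
  · rw [add_assoc, snakeDigit_mul_add hr, snakeDigit_mul_add hr']
    unfold reflectDigit; split <;> omega
  · have hq : n * a + r + 1 = n * (a + 1) + 0 := by rw [mul_add]; omega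
    rw [hq, snakeDigit_mul_add hr, snakeDigit_mul_add hn]
    unfold reflectDigit
    split <;> split <;> omega

lemma snake_succ (i j : ℕ) :
    snake n (i + 1) j ≤ snake n i j + 1 ∧ snake n i j ≤ snake n (i + 1) j + 1 := by
  unfold snake
  rw [Nat.succ_div]
  split
  · exact snakeDigit_succ _
  · simp

lemma snakeIndex_lt (hn : 0 < n) : ∀ {d : ℕ} (y : Fin d → ℕ), (∀ j, y j < n) →
    snakeIndex n d y < n ^ d
  | 0, _, _ => by simp [snakeIndex]
  | d + 1, y, hy => by
    have hq := snakeIndex_lt hn (Fin.tail y) fun j => hy j.succ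
    have hr := reflectDigit_lt (a := snakeIndex n d (Fin.tail y)) (hy 0)
    calc snakeIndex n (d + 1) y < n * (snakeIndex n d (Fin.tail y) + 1) := by
          rw [snakeIndex, mul_add_one]; omega
      _ ≤ n * n ^ d := Nat.mul_le_mul_left n hq
      _ = n ^ (d + 1) := (pow_succ' n d).symm

lemma snake_snakeIndex (hn : 0 < n) : ∀ {d : ℕ} (y : Fin d → ℕ), (∀ j, y j < n) →
    ∀ j : Fin d, snake n (snakeIndex n d y) j = y j
  | d + 1, y, hy, j => by
    have hr := reflectDigit_lt (a := snakeIndex n d (Fin.tail y)) (hy 0)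
    induction j using Fin.cases with
    | zero =>
      simp only [snake, Fin.val_zero, pow_zero, Nat.div_one, snakeIndex]
      rw [snakeDigit_mul_add hr, reflectDigit_reflectDigit (hy 0)]
    | succ j =>
      rw [snake, Fin.val_succ, pow_succ', ← Nat.div_div_eq_div_mul, snakeIndex,
        Nat.mul_add_div hn, Nat.div_eq_of_lt hr, add_zero]
      exact snake_snakeIndex hn (Fin.tail y) (fun j => hy j.succ) j

end Snake

/-- The witness is `k i = ⌊N * ∑_{j ≤ i} w j⌋₊ - ⌊N * ∑_{j < i} w j⌋₊`. -/
theorem exists_mem_piAntidiag_abs_prefix_sum_sub_le {N : ℕ} {w : ℕ → ℝ} (hw : ∀ i, 0 ≤ w i)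
    (hw1 : ∑ i ∈ Finset.range N, w i = 1) :
    ∃ k ∈ (Finset.range N).piAntidiag N,
      ∀ i ≤ N, |∑ j ∈ Finset.range i, (w j - k j / N)| ≤ 1 / N := by
  have hN : (0 : ℝ) < N := by
    rcases Nat.eq_zero_or_pos N with rfl | hN
    · simp at hw1
    · exact_mod_cast hN
  set K : ℕ → ℕ := fun i => ⌊N * ∑ j ∈ Finset.range i, w j⌋₊ with hK
  have hKmono : Monotone K := by
    refine monotone_nat_of_le_succ fun i => Nat.floor_mono ?_
    rw [Finset.sum_range_succ]
    exact mul_le_mul_of_nonneg_left (le_add_of_nonneg_right (hw i)) hN.le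
  have hKN : K N = N := by simp [hK, hw1]
  set k : ℕ → ℕ := fun i => if i < N then K (i + 1) - K i else 0
  have hprefix : ∀ i ≤ N, ∑ j ∈ Finset.range i, k j = K i := by
    intro i hi
    rw [Finset.sum_congr rfl fun j hj => if_pos ((Finset.mem_range.1 hj).trans_le hi),
      Finset.sum_range_tsub hKmono]
    simp [hK]
  refine ⟨k, ?_, fun i hi => ?_⟩
  · rw [Finset.mem_piAntidiag, hprefix N le_rfl, hKN]
    refine ⟨rfl, fun i hi => ?_⟩
    by_contra h
    exact hi (if_neg (by simpa using h))
  · set S := ∑ j ∈ Finset.range i, w j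
    have h1 := Nat.floor_le (mul_nonneg hN.le (Finset.sum_nonneg fun j _ => hw j) : 0 ≤ N * S)
    have h2 := Nat.lt_floor_add_one (N * S)
    have hdiv : S - K i / N = (N * S - K i) / N := by field_simp
    rw [Finset.sum_sub_distrib, ← Finset.sum_div, ← Nat.cast_sum, hprefix i hi, hdiv, abs_div,
      Nat.abs_cast, div_le_div_iff_of_pos_right hN, abs_le]
    constructor <;> linarith

theorem abs_sum_mul_le_of_abs_prefix_sum_le {N : ℕ} {c G : ℕ → ℝ} {η δ : ℝ}
    (hc : ∑ i ∈ Finset.range N, c i = 0) (hη : ∀ i ≤ N, |∑ j ∈ Finset.range i, c j| ≤ η)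
    (hδ : ∀ i, |G (i + 1) - G i| ≤ δ) :
    |∑ i ∈ Finset.range N, c i * G i| ≤ N * η * δ := by
  have hη0 : 0 ≤ η := (abs_nonneg _).trans (hη 0 (Nat.zero_le N))
  have hδ0 : 0 ≤ δ := (abs_nonneg _).trans (hδ 0)
  simp_rw [mul_comm (c _), ← smul_eq_mul]
  rw [Finset.sum_range_by_parts, hc, smul_zero, zero_sub, abs_neg]
  calc |∑ i ∈ Finset.range (N - 1), (G (i + 1) - G i) • ∑ j ∈ Finset.range (i + 1), c j|
      ≤ ∑ i ∈ Finset.range (N - 1), δ * η := by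
        refine (Finset.abs_sum_le_sum_abs _ _).trans (Finset.sum_le_sum fun i hi => ?_)
        rw [smul_eq_mul, abs_mul]
        exact mul_le_mul (hδ i) (hη _ (by simp at hi; omega)) (abs_nonneg _) hδ0
    _ ≤ N * η * δ := by
        rw [Finset.sum_const, Finset.card_range, nsmul_eq_mul, mul_comm δ, ← mul_assoc]
        gcongr
        exact_mod_cast Nat.sub_le N 1

lemma comp_eq_sum_indicator {X E : Type*} [AddCommMonoid E] {g : X → ℕ} {N : ℕ}
    (hg : ∀ x, g x < N) (F : ℕ → E) (x : X) :
    F (g x) = ∑ i ∈ Finset.range N, (g ⁻¹' {i}).indicator (fun _ => F i) x := by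
  simp [Set.indicator, eq_comm (a := g x), hg x]

section DiscreteApproximation

variable {X : Type*} [MeasurableSpace X]

lemma integrable_comp_of_forall_lt (μ : Measure X) [IsFiniteMeasure μ] {g : X → ℕ}
    (hgm : Measurable g) {N : ℕ} (hg : ∀ x, g x < N) (F : ℕ → ℝ) :
    Integrable (fun x => F (g x)) μ := by
  simp_rw [comp_eq_sum_indicator hg F]
  exact integrable_finsetSum _ fun i _ =>
    (integrable_const (F i)).indicator (hgm (measurableSet_singleton i))

lemma integral_comp_of_forall_lt (μ : Measure X) [IsFiniteMeasure μ] {g : X → ℕ}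
    (hgm : Measurable g) {N : ℕ} (hg : ∀ x, g x < N) (F : ℕ → ℝ) :
    ∫ x, F (g x) ∂μ = ∑ i ∈ Finset.range N, μ.real (g ⁻¹' {i}) * F i := by
  simp_rw [comp_eq_sum_indicator hg F]
  rw [integral_finsetSum]
  · refine Finset.sum_congr rfl fun i _ => ?_
    rw [integral_indicator_const _ (hgm (measurableSet_singleton i)), smul_eq_mul]
  · exact fun i _ => (integrable_const (F i)).indicator (hgm (measurableSet_singleton i))

noncomputable def discreteMeasure (p : ℕ → X) (N : ℕ) (k : ℕ → ℕ) : Measure X :=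
  ∑ i ∈ Finset.range N, ((k i : ℝ≥0∞) / N) • Measure.dirac (p i)

lemma isProbabilityMeasure_discreteMeasure (p : ℕ → X) {N : ℕ} (hN : N ≠ 0) {k : ℕ → ℕ}
    (hk : k ∈ (Finset.range N).piAntidiag N) : IsProbabilityMeasure (discreteMeasure p N k) := by
  constructor
  simp only [discreteMeasure, Measure.coe_finsetSum, Finset.sum_apply, Measure.smul_apply,
    measure_univ, smul_eq_mul, mul_one, ENNReal.div_eq_inv_mul]
  rw [← Finset.mul_sum, ← Nat.cast_sum, (Finset.mem_piAntidiag.1 hk).1]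
  exact ENNReal.inv_mul_cancel (by exact_mod_cast hN) (ENNReal.natCast_ne_top N)

lemma integral_discreteMeasure [MeasurableSingletonClass X] (p : ℕ → X) (N : ℕ) (k : ℕ → ℕ)
    (f : X → ℝ) :
    ∫ x, f x ∂discreteMeasure p N k = ∑ i ∈ Finset.range N, (k i / N : ℝ) * f (p i) := by
  rw [discreteMeasure, integral_finsetSum_measure]
  · refine Finset.sum_congr rfl fun i _ => ?_
    rw [integral_smul_measure, integral_dirac, ENNReal.toReal_div, smul_eq_mul]
    simp
  · intro i hi
    have hN : N ≠ 0 := Nat.ne_zero_of_lt (Finset.mem_range.1 hi)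
    exact (integrable_dirac enorm_lt_top).smul_measure
      (ENNReal.div_ne_top (ENNReal.natCast_ne_top _) (by exact_mod_cast hN))

end DiscreteApproximation

section Metric

variable {X : Type*} [PseudoMetricSpace X] [MeasurableSpace X]

lemma abs_integral_sub_integral_comp_le (μ : Measure X) [IsProbabilityMeasure μ] {f : X → ℝ}
    (hf : LipschitzWith 1 f) {h : X → X} {ε : ℝ} (hh : ∀ x, dist x (h x) ≤ ε)
    (hfi : Integrable f μ) (hfhi : Integrable (fun x => f (h x)) μ) :
    |∫ x, f x ∂μ - ∫ x, f (h x) ∂μ| ≤ ε := by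
  have hbound : ∀ x, ‖f x - f (h x)‖ ≤ ε := fun x =>
    (hf.dist_le_mul x (h x)).trans (by simpa using hh x)
  rw [← integral_sub hfi hfhi, ← Real.norm_eq_abs]
  simpa using norm_integral_le_of_norm_le_const (μ := μ) (Filter.Eventually.of_forall hbound)

theorem exists_discreteMeasure_abs_integral_sub_le [MeasurableSingletonClass X]
    (μ : Measure X) [IsProbabilityMeasure μ] {p : ℕ → X} {δ : ℝ}
    (hp : ∀ i, dist (p i) (p (i + 1)) ≤ δ) {g : X → ℕ} (hgm : Measurable g) {N : ℕ}
    (hg : ∀ x, g x < N) {ε : ℝ} (hpg : ∀ x, dist x (p (g x)) ≤ ε) :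
    ∃ k ∈ (Finset.range N).piAntidiag N, ∀ f : X → ℝ, LipschitzWith 1 f → Integrable f μ →
      |∫ x, f x ∂μ - ∫ x, f x ∂discreteMeasure p N k| ≤ ε + δ := by
  set w : ℕ → ℝ := fun i => μ.real (g ⁻¹' {i})
  have hw1 : ∑ i ∈ Finset.range N, w i = 1 := by
    simpa using (integral_comp_of_forall_lt μ hgm hg fun _ => (1 : ℝ)).symm
  obtain ⟨k, hk, hprefix⟩ :=
    exists_mem_piAntidiag_abs_prefix_sum_sub_le (fun i => measureReal_nonneg) hw1
  refine ⟨k, hk, fun f hf hfi => ?_⟩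
  have hN : (N : ℝ) ≠ 0 := by
    rintro h
    simp [show N = 0 by exact_mod_cast h] at hw1
  have hpath : ∀ i, |f (p (i + 1)) - f (p i)| ≤ δ := fun i => by
    rw [← Real.dist_eq, dist_comm]
    exact (hf.dist_le_mul _ _).trans (by simpa using hp i)
  have hcenter := abs_integral_sub_integral_comp_le μ hf hpg hfi
    (integrable_comp_of_forall_lt μ hgm hg (f ∘ p))
  rw [show ∫ x, f (p (g x)) ∂μ = _ from integral_comp_of_forall_lt μ hgm hg (f ∘ p)] at hcenter
  have hround : |∑ i ∈ Finset.range N, (w i - k i / N) * f (p i)| ≤ δ := by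
    have hc : ∑ i ∈ Finset.range N, (w i - k i / N) = 0 := by
      rw [Finset.sum_sub_distrib, hw1, ← Finset.sum_div, ← Nat.cast_sum,
        (Finset.mem_piAntidiag.1 hk).1, div_self hN, sub_self]
    simpa [hN] using abs_sum_mul_le_of_abs_prefix_sum_le hc hprefix hpath
  rw [integral_discreteMeasure]
  calc _ = |(∫ x, f x ∂μ - ∑ i ∈ Finset.range N, w i * f (p i)) +
        ∑ i ∈ Finset.range N, (w i - k i / N) * f (p i)| := by
        simp only [sub_mul, Finset.sum_sub_distrib, sub_add_sub_cancel]
    _ ≤ ε + δ := (abs_add_le _ _).trans (add_le_add hcenter hround)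

end Metric

section Cube

variable (n : ℕ) {d : ℕ}

noncomputable def gridDigit (x : ℝ) : ℕ := min (n - 1) ⌊x * n⌋₊

lemma measurable_gridDigit : Measurable (gridDigit n) :=
  (measurable_from_top (f := min (n - 1))).comp (measurable_id.mul_const _).nat_floor

noncomputable def gridIndex (x : Set.Icc (0 : Fin d → ℝ) 1) : ℕ :=
  snakeIndex n d fun j => gridDigit n (x.1 j)

lemma measurable_gridIndex : Measurable (gridIndex (d := d) n) :=
  (measurable_of_countable (snakeIndex n d)).comp <| measurable_pi_lambda _ fun j =>
    (measurable_gridDigit n).comp ((measurable_pi_apply j).comp measurable_subtype_coe)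

variable [NeZero n]

lemma gridDigit_lt (x : ℝ) : gridDigit n x < n :=
  (min_le_left _ _).trans_lt (Nat.sub_lt (NeZero.pos n) one_pos)

lemma abs_sub_gridDigit_le {x : ℝ} (hx0 : 0 ≤ x) (hx1 : x ≤ 1) :
    |x - (gridDigit n x + 1) / n| ≤ 1 / n := by
  have hn : (0 : ℝ) < n := Nat.cast_pos.2 (NeZero.pos n)
  have hlo : (gridDigit n x : ℝ) ≤ x * n :=
    (Nat.cast_le.2 (min_le_right _ _)).trans (Nat.floor_le (by positivity))
  have hhi : x * n ≤ gridDigit n x + 1 := by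
    rcases min_choice (n - 1) ⌊x * n⌋₊ with h | h <;> rw [gridDigit, h]
    · rw [Nat.cast_sub (NeZero.one_le), Nat.cast_one, sub_add_cancel]
      exact mul_le_of_le_one_left hn.le hx1
    · exact (Nat.lt_floor_add_one _).le
  have hdiv : x - (gridDigit n x + 1) / n = (x * n - (gridDigit n x + 1)) / n := by
    field_simp
  rw [hdiv, abs_div, abs_of_pos hn, div_le_div_iff_of_pos_right hn, abs_le]
  constructor <;> linarith

lemma gridIndex_lt (x : Set.Icc (0 : Fin d → ℝ) 1) : gridIndex n x < n ^ d :=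
  snakeIndex_lt (NeZero.pos n) _ fun _ => gridDigit_lt n _

lemma gridPoint_mem (i : ℕ) :
    (fun j : Fin d => ((snake n i j : ℝ) + 1) / n) ∈ Set.Icc (0 : Fin d → ℝ) 1 :=
  ⟨fun _ => by positivity, fun _ => div_le_one_of_le₀
    (by exact_mod_cast snakeDigit_lt (NeZero.pos n) _) (Nat.cast_nonneg n)⟩

/-- The `i`-th point of the grid `{1/n, …, n/n}^d` along the snake path. -/
noncomputable def gridPoint (i : ℕ) : Set.Icc (0 : Fin d → ℝ) 1 := ⟨_, gridPoint_mem n i⟩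

lemma dist_gridPoint_succ (i : ℕ) :
    dist (gridPoint (d := d) n i) (gridPoint n (i + 1)) ≤ 1 / n := by
  have hn : (0 : ℝ) < n := Nat.cast_pos.2 (NeZero.pos n)
  rw [Subtype.dist_eq, dist_pi_le_iff (by positivity)]
  intro j
  obtain ⟨h1, h2⟩ := snake_succ (n := n) i j
  have h1' : (snake n (i + 1) j : ℝ) ≤ snake n i j + 1 := by exact_mod_cast h1
  have h2' : (snake n i j : ℝ) ≤ snake n (i + 1) j + 1 := by exact_mod_cast h2
  simp only [gridPoint, Real.dist_eq]
  rw [← sub_div, abs_div, abs_of_pos hn, div_le_div_iff_of_pos_right hn, abs_le]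
  constructor <;> linarith

lemma dist_gridPoint_gridIndex (x : Set.Icc (0 : Fin d → ℝ) 1) :
    dist x (gridPoint n (gridIndex n x)) ≤ 1 / n := by
  rw [Subtype.dist_eq, dist_pi_le_iff (by positivity)]
  intro j
  simp only [gridPoint, gridIndex, Real.dist_eq]
  rw [snake_snakeIndex (NeZero.pos n) _ (fun _ => gridDigit_lt n _)]
  exact abs_sub_gridDigit_le n (x.2.1 j) (x.2.2 j)

end Cube

lemma exists_nat_two_div_le_and_le_three_div {γ : ℝ} (hγ : 0 < γ) (hγ1 : γ ≤ 1) :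
    ∃ n : ℕ, 0 < n ∧ 2 / (n : ℝ) ≤ γ ∧ (n : ℝ) ≤ 3 / γ := by
  have hn : 2 / γ ≤ ⌈2 / γ⌉₊ := Nat.le_ceil _
  have hn0 : (0 : ℝ) < ⌈2 / γ⌉₊ := (div_pos two_pos hγ).trans_le hn
  refine ⟨⌈2 / γ⌉₊, by exact_mod_cast hn0, ?_, ?_⟩
  · rw [div_le_iff₀ hn0]
    rwa [div_le_iff₀ hγ, mul_comm] at hn
  · have := Nat.ceil_lt_add_one (div_pos two_pos hγ).le
    have : 1 ≤ 1 / γ := by rwa [le_div_iff₀ hγ, one_mul]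
    linarith [show 3 / γ = 2 / γ + 1 / γ by ring]

lemma Finset.card_piAntidiag_nat {ι : Type*} [DecidableEq ι] (s : Finset ι) (m : ℕ) :
    (s.piAntidiag m).card = (s.card + m - 1).choose m := by
  rw [← Finset.card_finsuppAntidiag_nat_eq_choose, Finset.finsuppAntidiag, Finset.card_map,
    Finset.card_attach]

lemma choose_pow_le_exp_of_le {n d : ℕ} {c : ℝ} (hn : (n : ℝ) ≤ c) :
    (((n ^ d + n ^ d - 1).choose (n ^ d) : ℕ) : ℝ) ≤ Real.exp ((5 / 3 * c) ^ d) := by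
  have hc : 0 ≤ c := (Nat.cast_nonneg n).trans hn
  rcases Nat.eq_zero_or_pos d with rfl | hd
  · simp
  set N := n ^ d
  have hlog4 : Real.log 4 ≤ 5 / 3 := by
    have : Real.log 4 = 2 * Real.log 2 := by
      rw [show (4 : ℝ) = 2 ^ 2 by norm_num, Real.log_pow, Nat.cast_ofNat]
    linarith [Real.log_two_lt_d9]
  have hchoose : (N + N - 1).choose N ≤ 4 ^ N :=
    calc (N + N - 1).choose N ≤ 2 ^ (N + N - 1) := Nat.choose_le_two_pow _ _
      _ ≤ 2 ^ (2 * N) := Nat.pow_le_pow_right two_pos (by omega)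
      _ = 4 ^ N := by rw [pow_mul]; norm_num
  calc (((N + N - 1).choose N : ℕ) : ℝ) ≤ 4 ^ N := by exact_mod_cast hchoose
    _ = Real.exp (N * Real.log 4) := by rw [Real.exp_nat_mul, Real.exp_log four_pos]
    _ ≤ Real.exp ((5 / 3) ^ d * c ^ d) := by
      refine Real.exp_le_exp.2 ?_
      calc N * Real.log 4 ≤ c ^ d * (5 / 3) := by
            gcongr
            push_cast [N]
            exact pow_le_pow_left₀ (Nat.cast_nonneg n) hn d
        _ ≤ (5 / 3) ^ d * c ^ d := by
            rw [mul_comm]; gcongr; exact le_self_pow₀ (by norm_num) hd.ne'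
    _ = Real.exp ((5 / 3 * c) ^ d) := by rw [mul_pow]

theorem stmt19 (d : ℕ) (γ : ℝ) (hγ : 0 < γ) (hγ1 : γ < 1) :
    ∃ Λ : Set (Measure ↥(Set.Icc (0 : Fin d → ℝ) 1)), Λ.Finite ∧
      (∀ ν ∈ Λ, IsProbabilityMeasure ν) ∧
      (Λ.ncard : ℝ) ≤ Real.exp ((5 / γ) ^ d) ∧
      ∀ μ : Measure ↥(Set.Icc (0 : Fin d → ℝ) 1), IsProbabilityMeasure μ →
        ∃ ν ∈ Λ,
          (⨆ f : {f : ↥(Set.Icc (0 : Fin d → ℝ) 1) → ℝ // LipschitzWith 1 f},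
            |∫ x, f.1 x ∂μ - ∫ x, f.1 x ∂ν|) ≤ γ := by
  obtain ⟨n, hn0, hnγ, hn3⟩ := exists_nat_two_div_le_and_le_three_div hγ hγ1.le
  have : NeZero n := ⟨hn0.ne'⟩
  set K := (Finset.range (n ^ d)).piAntidiag (n ^ d)
  refine ⟨discreteMeasure (gridPoint n) (n ^ d) '' K, K.finite_toSet.image _, ?_, ?_, ?_⟩
  · rintro _ ⟨k, hk, rfl⟩
    exact isProbabilityMeasure_discreteMeasure _ (NeZero.ne _) hk
  · calc _ ≤ (K.card : ℝ) := by
          exact_mod_cast (Set.ncard_image_le K.finite_toSet).trans (Set.ncard_coe_finset K).le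
      _ ≤ Real.exp ((5 / 3 * (3 / γ)) ^ d) := by
          rw [Finset.card_piAntidiag_nat, Finset.card_range]
          exact choose_pow_le_exp_of_le hn3
      _ = Real.exp ((5 / γ) ^ d) := by congr 2; field_simp
  · intro μ hμ
    obtain ⟨k, hk, hμk⟩ := exists_discreteMeasure_abs_integral_sub_le μ (dist_gridPoint_succ n)
      (measurable_gridIndex n) (gridIndex_lt n) (dist_gridPoint_gridIndex n)
    refine ⟨_, ⟨k, hk, rfl⟩, Real.iSup_le (fun f => (hμk f.1 f.2 ?_).trans ?_) hγ.le⟩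
    · exact f.2.continuous.integrable_of_hasCompactSupport (.of_compactSpace _)
    · rwa [← add_div, one_add_one_eq_two]
end
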